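/- Define τ(f) = inf{t ≥ 0 : f(t) ≤ 0} and τ^<(f) = inf{t ≥ 0 : f(t) < 0} for f in the Skorokhod space D([0,∞),ℝ). Suppose f is continuous, τ(f) < ∞, τ^<(f) = τ(f), and f(t) ≤ 0 for all t ≥ τ(f). If f_n → f in the Skorokhod topology on D([0,∞),ℝ), then τ(f_n) → τ(f). -/

import Mathlib

/-!
Since `τ^<(f) = τ(f)`, just after `τ(f)` there are points where `f` is strictly negative; `f_n`
is eventually negative there too, which bounds `τ(f_n)` from above. Below `τ(f)`, on a compact
interval `[0, b]`, the continuous `f` has a positive minimum, so uniform convergence keeps `f_n`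
positive on `[0, b]` and `τ(f_n) ≥ b` eventually.
-/

open Filter Set Topology

lemma TendstoUniformlyOn.eventually_forall_lt_of_continuousOn {α ι : Type*} [TopologicalSpace α]
    {F : ι → α → ℝ} {f : α → ℝ} {l : Filter ι} {K : Set α} {c : ℝ}
    (hF : TendstoUniformlyOn F f l K) (hK : IsCompact K) (hf : ContinuousOn f K)
    (hc : ∀ x ∈ K, c < f x) :
    ∀ᶠ i in l, ∀ x ∈ K, c < F i x := by
  obtain ⟨a, hca, ha⟩ := hK.exists_forall_le' hf hc
  filter_upwards [hF.neg.eventually_forall_lt (neg_lt_neg hca) fun x hx => neg_le_neg (ha x hx)]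
    with i hi x hx
  simpa using hi x hx

noncomputable def hittingTime (g : ℝ → ℝ) : ℝ :=
  sInf {t : ℝ | 0 ≤ t ∧ g t ≤ 0}

section hittingTime

variable {g : ℝ → ℝ} {s : ℝ}

lemma hittingTime_le (hs : 0 ≤ s) (hgs : g s ≤ 0) : hittingTime g ≤ s :=
  csInf_le ⟨0, fun _ ht => ht.1⟩ ⟨hs, hgs⟩

lemma pos_of_lt_hittingTime (hs : 0 ≤ s) (h : s < hittingTime g) : 0 < g s :=
  lt_of_not_ge fun hgs => h.not_ge (hittingTime_le hs hgs)

lemma le_hittingTime {a : ℝ} (hs : 0 ≤ s) (hgs : g s ≤ 0) (hpos : ∀ t ∈ Icc 0 a, 0 < g t) :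
    a ≤ hittingTime g :=
  le_csInf ⟨s, hs, hgs⟩ fun t ⟨ht, hgt⟩ =>
    le_of_not_gt fun hta => (hpos t ⟨ht, hta.le⟩).not_ge hgt

end hittingTime

section convergence

variable {ι : Type*} {l : Filter ι} {F : ι → ℝ → ℝ} {f : ℝ → ℝ}

lemma eventually_hittingTime_lt {b : ℝ} (hF : ∀ t, 0 ≤ t → Tendsto (fun i => F i t) l (𝓝 (f t)))
    (hne : {t : ℝ | 0 ≤ t ∧ f t < 0}.Nonempty) (hb : sInf {t : ℝ | 0 ≤ t ∧ f t < 0} < b) :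
    ∀ᶠ i in l, hittingTime (F i) < b := by
  obtain ⟨s, ⟨hs, hfs⟩, hsb⟩ := (csInf_lt_iff ⟨0, fun _ ht => ht.1⟩ hne).mp hb
  filter_upwards [(hF s hs).eventually_lt_const hfs] with i hi
  exact (hittingTime_le hs hi.le).trans_lt hsb

lemma eventually_lt_hittingTime {a s : ℝ} (hF : TendstoLocallyUniformlyOn F f l (Ici 0))
    (hf : ContinuousOn f (Ici 0)) (hs : 0 ≤ s) (hfs : f s < 0) (ha : a < hittingTime f) :
    ∀ᶠ i in l, a < hittingTime (F i) := by
  obtain ⟨b, hab, hb⟩ := exists_between ha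
  have hpos : ∀ t ∈ Icc 0 b, 0 < f t := fun t ht => pos_of_lt_hittingTime ht.1 (ht.2.trans_lt hb)
  have hunif : TendstoUniformlyOn F f l (Icc 0 b) :=
    (tendstoLocallyUniformlyOn_iff_tendstoUniformlyOn_of_compact isCompact_Icc).mp
      (hF.mono Icc_subset_Ici_self)
  filter_upwards [hunif.eventually_forall_lt_of_continuousOn isCompact_Icc
      (hf.mono Icc_subset_Ici_self) hpos, (hF.tendsto_at hs).eventually_lt_const hfs]
    with i hpos_i hneg_i
  exact hab.trans_le (le_hittingTime hs hneg_i.le hpos_i)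

end convergence

theorem hitting_time_convergence_general
    (f : ℝ → ℝ) (fn : ℕ → ℝ → ℝ)
    (hf : Continuous f)
    (hne' : {t : ℝ | 0 ≤ t ∧ f t < 0}.Nonempty)
    (hτeq : sInf {t : ℝ | 0 ≤ t ∧ f t < 0} = sInf {t : ℝ | 0 ≤ t ∧ f t ≤ 0})
    (hconv : TendstoLocallyUniformlyOn fn f atTop (Set.Ici 0)) :
    Tendsto (fun n => sInf {t : ℝ | 0 ≤ t ∧ fn n t ≤ 0}) atTop
      (nhds (sInf {t : ℝ | 0 ≤ t ∧ f t ≤ 0})) := by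
  change Tendsto (fun n => hittingTime (fn n)) atTop (𝓝 (hittingTime f))
  obtain ⟨s, hs, hfs⟩ := hne'
  refine tendsto_order.2 ⟨fun a ha => ?_, fun b hb => ?_⟩
  · exact eventually_lt_hittingTime hconv hf.continuousOn hs hfs ha
  · exact eventually_hittingTime_lt (fun t ht => hconv.tendsto_at ht) ⟨s, hs, hfs⟩
      (hτeq.trans_lt hb)

/-- Continuity of the first hitting time of `(-∞,0]` along sequences converging (locally
uniformly on `[0,∞)`, as Skorokhod convergence to a continuous limit amounts to) to a
continuous limit `f` with `τ(f) < ∞`, `τ^<(f) = τ(f)`, and `f ≤ 0` after `τ(f)`. -/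
theorem hitting_time_convergence
    (f : ℝ → ℝ) (fn : ℕ → ℝ → ℝ)
    (hf : Continuous f)
    (hne : {t : ℝ | 0 ≤ t ∧ f t ≤ 0}.Nonempty)
    (hne' : {t : ℝ | 0 ≤ t ∧ f t < 0}.Nonempty)
    (hτeq : sInf {t : ℝ | 0 ≤ t ∧ f t < 0} = sInf {t : ℝ | 0 ≤ t ∧ f t ≤ 0})
    (hafter : ∀ t : ℝ, sInf {t : ℝ | 0 ≤ t ∧ f t ≤ 0} ≤ t → f t ≤ 0)
    (hconv : TendstoLocallyUniformlyOn fn f atTop (Set.Ici 0)) :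
    Tendsto (fun n => sInf {t : ℝ | 0 ≤ t ∧ fn n t ≤ 0}) atTop
      (nhds (sInf {t : ℝ | 0 ≤ t ∧ f t ≤ 0})) :=
  hitting_time_convergence_general f fn hf hne' hτeq hconv
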